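/- arXiv:math/0608479 — 5 statements merged into one kernel-verified Lean document; each statement's English description precedes it below -/
import Mathlib

section
/- Let (F,d) be a differential field of characteristic zero, g ∈ F a nonzero element, and δ = g⁻¹d. Then for every natural number k ≥ 1, dᵏ = Σ_{i=1}^{k} Φᵏᵢ(g) δⁱ as operators, where Φᵏᵢ(g) = Σ_α C_α g^{α₁}(dg)^{α₂}⋯(d^{k-1}g)^{α_k}, the sum taken over all tuples α = (α₁,...,α_k) of nonnegative integers with α₁+⋯+α_k = i and 1·α₁+2·α₂+⋯+k·α_k = k, and C_α = k!/(α₁!⋯α_k!·∏_{j=1}^{k}(j!)^{α_j}). -/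
open Finset

/-- The coefficient `Φᵏᵢ(g) = Σ_α C_α g^{α₁}(dg)^{α₂}⋯(d^{k-1}g)^{α_k}`, the sum over all
tuples `α = (α₁,…,α_k)` of nonnegative integers with `Σ α_j = i` and `Σ j·α_j = k`,
where `C_α = k!/(α₁!⋯α_k!·∏ⱼ (j!)^{α_j})`.  (Each `α_j ≤ k`, so we may index the sum by
functions `Fin k → Fin (k+1)`.) -/
noncomputable def Phi {F : Type} [Field F] [CharZero F] (d : F → F) (g : F) (k i : ℕ) : F :=
  ∑ α ∈ (Finset.univ : Finset (Fin k → Fin (k + 1))).filter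
      (fun α => (∑ j : Fin k, (α j : ℕ)) = i ∧ (∑ j : Fin k, ((j : ℕ) + 1) * (α j : ℕ)) = k),
    (((Nat.factorial k : ℚ) /
        ((∏ j : Fin k, (Nat.factorial (α j : ℕ) : ℚ)) *
          ∏ j : Fin k, (Nat.factorial ((j : ℕ) + 1) : ℚ) ^ (α j : ℕ))) : ℚ) •
      ∏ j : Fin k, (d^[(j : ℕ)] g) ^ (α j : ℕ)

/-!
Let `X(t) = Σₙ dⁿg · tⁿ⁺¹/(n+1)!` and `Bₖᵢ = k!/i! · [tᵏ] Xⁱ`, the partial Bell polynomials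
evaluated at `g, dg, d²g, …`; the multinomial theorem gives `Bₖᵢ = Φᵏᵢ(g)`. Differentiating in
`t` gives `X' = g + dX`, with `d` acting on coefficients, hence `(Xⁱ⁺¹)' = (i+1) g Xⁱ + d(Xⁱ⁺¹)`,
i.e. `Bₖ₊₁,ᵢ₊₁ = d Bₖ,ᵢ₊₁ + g Bₖᵢ`. This is exactly the recursion obtained by applying `d` to
`dᵏa = Σ Bₖᵢ δⁱa`, since `d(δⁱa) = g δⁱ⁺¹a`.
-/

open PowerSeries Nat

namespace Derivation

variable {A R : Type*} [CommSemiring A] [CommRing R] [Algebra A R]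

noncomputable def mapCoeffsPowerSeries (D : Derivation A R R) : Derivation A R⟦X⟧ R⟦X⟧ :=
  Derivation.mk'
    { toFun := fun f => PowerSeries.mk fun n => D (coeff n f)
      map_add' := fun f g => by ext n; simp
      map_smul' := fun a f => by ext n; simp }
    fun f g => by
      ext n
      simp only [LinearMap.coe_mk, AddHom.coe_mk, coeff_mk, smul_eq_mul, map_add, coeff_mul,
        map_sum, leibniz, mul_comm g, ← sum_add_distrib]
      exact sum_congr rfl fun p _ => by ring

@[simp]
theorem coeff_mapCoeffsPowerSeries (D : Derivation A R R) (f : R⟦X⟧) (n : ℕ) :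
    coeff n (D.mapCoeffsPowerSeries f) = D (coeff n f) :=
  coeff_mk n fun n => D (coeff n f)

end Derivation

theorem coeff_sum_C_mul_X_pow_pow {R : Type*} [CommSemiring R] {n : ℕ} (c : Fin n → R)
    (k i : ℕ) :
    coeff k ((∑ j : Fin n, C (c j) * X ^ (j + 1 : ℕ)) ^ i) =
      ∑ α ∈ (piAntidiag univ i).filter (fun α : Fin n → ℕ => ∑ j : Fin n, ((j : ℕ) + 1) * α j = k),
        (multinomial univ α : R) * ∏ j, c j ^ α j := by
  rw [sum_pow_eq_sum_piAntidiag, map_sum, sum_filter]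
  refine sum_congr rfl fun α _ => ?_
  simp only [mul_pow, prod_mul_distrib, ← map_pow, ← map_prod, ← pow_mul, prod_pow_eq_pow_sum]
  rw [← map_natCast (C (R := R)), ← mul_assoc, ← map_mul, coeff_C_mul_X_pow]
  simp only [eq_comm, mul_comm]

variable {R : Type*} [CommRing R] [Algebra ℚ R]

def Derivation.ofAddLeibniz (d : R → R) (hadd : ∀ a b, d (a + b) = d a + d b)
    (hmul : ∀ a b, d (a * b) = d a * b + a * d b) : Derivation ℚ R R :=
  Derivation.mk' (AddMonoidHom.mk' d hadd).toRatLinearMap fun a b => by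
    simp only [AddMonoidHom.coe_toRatLinearMap, AddMonoidHom.mk'_apply, hmul, smul_eq_mul]
    ring

noncomputable def bellSeries (D : Derivation ℚ R R) (g : R) : R⟦X⟧ :=
  X * PowerSeries.mk fun n => ((n + 1)! : ℚ)⁻¹ • D^[n] g

theorem derivative_bellSeries (D : Derivation ℚ R R) (g : R) :
    d⁄dX R (bellSeries D g) = C g + D.mapCoeffsPowerSeries (bellSeries D g) := by
  ext n
  rw [coeff_derivative, map_add, coeff_C, Derivation.coeff_mapCoeffsPowerSeries, bellSeries,
    coeff_succ_X_mul, coeff_mk]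
  rcases n with _ | n
  · simp
  · rw [coeff_succ_X_mul, coeff_mk, if_neg n.succ_ne_zero, zero_add, D.map_smul,
      ← Function.iterate_succ_apply' D,
      show ((n + 1 : ℕ) : R) + 1 = algebraMap ℚ R (n + 1 + 1 : ℕ) by
        rw [map_natCast]; push_cast; ring,
      Algebra.smul_def, Algebra.smul_def, mul_right_comm, ← map_mul]
    congr 2
    rw [factorial_succ (n + 1)]
    push_cast
    field_simp

noncomputable def partialBell (D : Derivation ℚ R R) (g : R) (k i : ℕ) : R :=
  ((k ! : ℚ) / i !) • coeff k (bellSeries D g ^ i)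

theorem derivative_bellSeries_pow_succ (D : Derivation ℚ R R) (g : R) (i : ℕ) :
    d⁄dX R (bellSeries D g ^ (i + 1)) =
      (i + 1) • (C g * bellSeries D g ^ i) + D.mapCoeffsPowerSeries (bellSeries D g ^ (i + 1)) := by
  rw [Derivation.leibniz_pow, Derivation.leibniz_pow, derivative_bellSeries, smul_add, smul_add,
    Nat.add_sub_cancel, smul_eq_mul, mul_comm]

theorem partialBell_succ_succ (D : Derivation ℚ R R) (g : R) (k i : ℕ) :
    partialBell D g (k + 1) (i + 1) = D (partialBell D g k (i + 1)) + g * partialBell D g k i := by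
  have h := congrArg (coeff k) (derivative_bellSeries_pow_succ D g i)
  rw [coeff_derivative, map_add, map_nsmul, coeff_C_mul, Derivation.coeff_mapCoeffsPowerSeries,
    mul_comm, ← Nat.cast_add_one, ← nsmul_eq_mul, ← Nat.cast_smul_eq_nsmul ℚ,
    ← Nat.cast_smul_eq_nsmul ℚ] at h
  have hk : ((k + 1)! / (i + 1)! : ℚ) = k ! / (i + 1)! * (k + 1 : ℕ) := by
    push_cast [factorial_succ k]; ring
  have hi : (k ! / (i + 1)! * (i + 1 : ℕ) : ℚ) = k ! / i ! := by
    push_cast [factorial_succ i]; field_simp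
  rw [partialBell, partialBell, partialBell, hk, ← smul_smul, h, smul_add, smul_smul, hi,
    D.map_smul, mul_smul_comm, add_comm]

theorem partialBell_zero_right (D : Derivation ℚ R R) (g : R) (k : ℕ) :
    partialBell D g k 0 = if k = 0 then 1 else 0 := by
  rcases k with _ | k <;> simp [partialBell, coeff_one]

theorem partialBell_eq_zero_of_lt (D : Derivation ℚ R R) (g : R) {k i : ℕ} (h : k < i) :
    partialBell D g k i = 0 := by
  rw [partialBell, bellSeries, mul_pow, coeff_X_pow_mul', if_neg h.not_ge, smul_zero]

theorem iterate_eq_sum_partialBell (D : Derivation ℚ R R) (g : R) (δ : R → R)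
    (hδ : ∀ a, D a = g * δ a) (a : R) (k : ℕ) :
    D^[k] a = ∑ i ∈ range (k + 1), partialBell D g k i * δ^[i] a := by
  induction k with
  | zero => simp [partialBell_zero_right]
  | succ k ih =>
    have hterm (i : ℕ) : D (partialBell D g k i * δ^[i] a) =
        D (partialBell D g k i) * δ^[i] a + g * partialBell D g k i * δ^[i + 1] a := by
      rw [Derivation.leibniz, smul_eq_mul, smul_eq_mul, hδ, Function.iterate_succ_apply']
      ring
    have hconst : D (partialBell D g k 0) = 0 := by
      rw [partialBell_zero_right]; split_ifs <;> simp
    rw [Function.iterate_succ_apply', ih, map_sum, sum_range_succ' _ (k + 1)]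
    simp only [hterm, partialBell_succ_succ, partialBell_zero_right, add_mul, sum_add_distrib]
    rw [sum_range_succ' (fun i => D (partialBell D g k i) * δ^[i] a),
      sum_range_succ (fun i => D (partialBell D g k (i + 1)) * δ^[i + 1] a),
      partialBell_eq_zero_of_lt D g k.lt_succ_self, hconst]
    simp

theorem coeff_bellSeries_pow (D : Derivation ℚ R R) (g : R) (k i : ℕ) :
    coeff k (bellSeries D g ^ i) =
      coeff k ((∑ j : Fin k, C (((j + 1)! : ℚ)⁻¹ • D^[j] g) * X ^ (j + 1 : ℕ)) ^ i) := by
  set T := ∑ j : Fin k, C (((j + 1)! : ℚ)⁻¹ • D^[j] g) * X ^ (j + 1 : ℕ)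
  have hT : X ^ (k + 1) ∣ bellSeries D g - T := by
    refine X_pow_dvd_iff.2 fun m hm => ?_
    rw [map_sub, sub_eq_zero, bellSeries, map_sum]
    simp only [coeff_C_mul_X_pow]
    rcases m with _ | n
    · simp
    · rw [coeff_succ_X_mul, coeff_mk, Fin.sum_univ_eq_sum_range
        (fun j => if n + 1 = j + 1 then ((j + 1)! : ℚ)⁻¹ • D^[j] g else 0)]
      simp [show n < k by omega]
  have := X_pow_dvd_iff.1 (hT.trans (sub_dvd_pow_sub_pow _ _ i)) k k.lt_succ_self
  rwa [map_sub, sub_eq_zero] at this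

theorem partialBell_eq_sum (D : Derivation ℚ R R) (g : R) (k i : ℕ) :
    partialBell D g k i =
      ∑ α ∈ (piAntidiag univ i).filter (fun α : Fin k → ℕ => ∑ j : Fin k, ((j : ℕ) + 1) * α j = k),
        (k ! / ((∏ j : Fin k, ((α j)! : ℚ)) * ∏ j : Fin k, (((j : ℕ) + 1)! : ℚ) ^ α j)) •
          ∏ j : Fin k, (D^[j] g) ^ α j := by
  rw [partialBell, coeff_bellSeries_pow, coeff_sum_C_mul_X_pow_pow, smul_sum]
  refine sum_congr rfl fun α hα => ?_
  have hm : (∏ j, ((α j)! : ℚ)) * multinomial univ α = i ! := by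
    rw [(mem_piAntidiag.1 (mem_filter.1 hα).1).1.symm]
    exact_mod_cast multinomial_spec univ α
  simp only [Algebra.smul_def, mul_pow, prod_mul_distrib, ← map_pow, ← map_prod,
    ← map_natCast (algebraMap ℚ R), ← mul_assoc, ← map_mul]
  congr 2
  have hm0 : (multinomial univ α : ℚ) ≠ 0 := by exact_mod_cast (multinomial_pos univ α).ne'
  rw [← hm]
  simp only [inv_pow, prod_inv_distrib]
  field_simp

theorem Phi_eq_partialBell {F : Type} [Field F] [CharZero F] (D : Derivation ℚ F F) (g : F)
    (k i : ℕ) : Phi D g k i = partialBell D g k i := by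
  have hval {β : Fin k → ℕ} (hβ : ∑ j : Fin k, ((j : ℕ) + 1) * β j = k) (j : Fin k) :
      (Fin.ofNat (k + 1) (β j) : ℕ) = β j := by
    refine Nat.mod_eq_of_lt (Nat.lt_succ_of_le ?_)
    exact hβ ▸ (Nat.le_mul_of_pos_left (β j) (Nat.add_one_pos j)).trans
      (single_le_sum (f := fun j : Fin k => ((j : ℕ) + 1) * β j) (fun _ _ => Nat.zero_le _)
        (mem_univ j))
  rw [Phi, partialBell_eq_sum]
  refine sum_nbij' (fun α j => (α j : ℕ)) (fun β j => Fin.ofNat (k + 1) (β j)) ?_ ?_ ?_ ?_ ?_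
  · intro α hα
    simp_all
  · intro β hβ
    rw [mem_filter, mem_piAntidiag] at hβ
    simp only [mem_filter, mem_univ, true_and, hval hβ.2]
    exact ⟨hβ.1.1, hβ.2⟩
  · intro α _
    funext j
    simp
  · intro β hβ
    funext j
    exact hval (mem_filter.1 hβ).2 j
  · intro α _
    rfl

/-- in a differential field `(F,d)` of characteristic zero, for `g ≠ 0` and
`δ = g⁻¹d`, one has `dᵏ = Σ_{i=1}^{k} Φᵏᵢ(g) δⁱ` as operators on `F`, for every `k ≥ 1`. -/
theorem stmt_1 (F : Type) [Field F] [CharZero F]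
    (d : F → F)
    (hd_add : ∀ a b : F, d (a + b) = d a + d b)
    (hd_mul : ∀ a b : F, d (a * b) = d a * b + a * d b)
    (g : F) (hg : g ≠ 0)
    (δ : F → F) (hδ : ∀ a : F, δ a = g⁻¹ * d a)
    (k : ℕ) (hk : 1 ≤ k) :
    ∀ a : F, d^[k] a = ∑ i ∈ Finset.Icc 1 k, Phi d g k i * δ^[i] a := by
  intro a
  set D := Derivation.ofAddLeibniz d hd_add hd_mul
  have hD : d = D := rfl
  have hDδ (b : F) : D b = g * δ b := by rw [hδ, mul_inv_cancel_left₀ hg, hD]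
  rw [hD, iterate_eq_sum_partialBell D g δ hDδ, sum_range_succ', partialBell_zero_right,
    if_neg (by omega), zero_mul, add_zero, ← Ico_add_one_right_eq_Icc, sum_Ico_eq_sum_range,
    Nat.add_sub_cancel]
  exact sum_congr rfl fun i _ => by rw [Phi_eq_partialBell, add_comm 1 i]
end

section
/- Each coordinate xᵢ satisfies the linear differential equation Σ_{i=1}^{n+1} (−1)^{n+1−i} (W^δ_i / W^δ) δⁱ y = 0, whose coefficients W^δ_i/W^δ are (F*, GL(n,C)⋉Cⁿ)-invariant differential rational functions. In particular each xᵢ is δ-differentially algebraic over (C⟨x,d⟩^{(F*,H)}, δ) for any subgroup H of GL(n,C)⋉Cⁿ. -/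
/-!
Appending the column `(δxⱼ, …, δⁿ⁺¹xⱼ)` to the matrix `[δx, …, δⁿ⁺¹x]` repeats the column of
`xⱼ`, so the determinant vanishes; its Laplace expansion along the new column is
`Σ (-1)^(n+1-i) W^δ_i δⁱxⱼ = 0`. The Wronskian `W^δ` is nonzero: `δᵏx` is a combination of
`dx, …, dᵏx` with leading coefficient `p⁻ᵏ` and coefficients independent of the coordinate,
so `W^δ` is `∏ p⁻ᵏ` times `det[dᵏxᵢ]`, a nonzero polynomial.

A substitution `τ` (`x ↦ hx + h₀`, `d ↦ g⁻¹d`) sends `p` to `g⁻¹p`, so it intertwines `δ` with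
the same operator `(ι p)⁻¹ d` as the inclusion `ι` does. That operator kills the constants and
commutes with multiplication by them, hence `τ(δᵏx) = h · ι(δᵏx)` for `k ≥ 1`: every `W^δ_i` is
a relative invariant of weight `det h`, and the quotients `W^δ_i / W^δ` are invariant. The linear
polynomial with these coefficients is a nonzero relation for `xⱼ`, as its `Xₙ₊₁`-coefficient is 1.
-/

/-- The field of differential rational functions in `x₁,…,xₙ` over `C`:
the fraction field of the polynomial ring in the indeterminates `dᵏxᵢ`. -/
abbrev DRF (C : Type) [Field C] (n : ℕ) := FractionRing (MvPolynomial (Fin n × ℕ) C)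

/-- `dᵏxᵢ` as an element of `DRF C n`. -/
noncomputable def XX (C : Type) [Field C] (n : ℕ) (i : Fin n) (k : ℕ) : DRF C n :=
  algebraMap (MvPolynomial (Fin n × ℕ) C) (DRF C n) (MvPolynomial.X (i, k))

/-- The embedding of the constants `C` into `DRF C n`. -/
noncomputable def CC (C : Type) [Field C] (n : ℕ) : C →+* DRF C n :=
  (algebraMap (MvPolynomial (Fin n × ℕ) C) (DRF C n)).comp MvPolynomial.C

/-- `τ : C⟨x,d⟩ → F⟨x,d⟩` is the substitution `x ↦ hx+h₀`, `d ↦ g⁻¹·dL`: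
it fixes constants (via `emb : C → F`) and sends `dᵏxᵢ` to `δᵏ(Σⱼhᵢⱼxⱼ + h₀ᵢ)`
where `δ = g⁻¹·dL`. -/
def IsSubst (C F : Type) [Field C] [Field F] (n : ℕ) (emb : C →+* F)
    (dL : DRF F n → DRF F n) (g : F)
    (h : Matrix (Fin n) (Fin n) C) (h₀ : Fin n → C)
    (τ : DRF C n →+* DRF F n) : Prop :=
  (∀ c : C, τ (CC C n c) = CC F n (emb c)) ∧
  (∀ (i : Fin n) (k : ℕ),
    τ (XX C n i k) = (fun a => (CC F n g)⁻¹ * dL a)^[k]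
      ((∑ j, CC F n (emb (h i j)) * XX F n j 0) + CC F n (emb (h₀ i))))


/-- `W^δ_i{x}` for `1 ≤ i ≤ n+1`: the determinant obtained from `[δx,…,δ^{n+1}x]` by
deleting the column `δⁱx`; `Wd δ n (n+1) = W^δ = det[δx,…,δⁿx]`. -/
noncomputable def Wd {C : Type} [Field C] {n : ℕ} (δ : DRF C n → DRF C n) (i : ℕ) : DRF C n :=
  Matrix.det (Matrix.of fun a b : Fin n =>
    δ^[if (a : ℕ) + 1 < i then (a : ℕ) + 1 else (a : ℕ) + 2] (XX C n b 0))

theorem IsFractionRing.twistedDeriv_ext {A K B : Type*} [CommRing A] [Field K] [Algebra A K]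
    [IsFractionRing A K] [Field B] (τ : K →+* B) {Φ Ψ : K → B}
    (hΦ : ∀ a b, Φ (a * b) = Φ a * τ b + τ a * Φ b)
    (hΨ : ∀ a b, Ψ (a * b) = Ψ a * τ b + τ a * Ψ b)
    (h : ∀ a : A, Φ (algebraMap A K a) = Ψ (algebraMap A K a)) : Φ = Ψ := by
  have := (algebraMap A K).domain_nontrivial
  funext z
  obtain ⟨x, y, hy, rfl⟩ := IsFractionRing.div_surjective A z
  set x' := algebraMap A K x
  set y' := algebraMap A K y
  have hy' : y' ≠ 0 := IsFractionRing.to_map_ne_zero_of_mem_nonZeroDivisors hy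
  have hLeibniz : Φ (x' / y') * τ y' + τ (x' / y') * Φ y' =
      Ψ (x' / y') * τ y' + τ (x' / y') * Ψ y' := by
    rw [← hΦ, ← hΨ, div_mul_cancel₀ _ hy', h]
  rw [h, add_left_inj] at hLeibniz
  exact mul_right_cancel₀ ((map_ne_zero τ).mpr hy') hLeibniz

theorem MvPolynomial.twistedDeriv_ext {σ R B : Type*} [CommSemiring R] [CommSemiring B]
    (τ : MvPolynomial σ R →+* B) {Φ Ψ : MvPolynomial σ R → B}
    (hΦ_add : ∀ a b, Φ (a + b) = Φ a + Φ b) (hΦ_mul : ∀ a b, Φ (a * b) = Φ a * τ b + τ a * Φ b)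
    (hΨ_add : ∀ a b, Ψ (a + b) = Ψ a + Ψ b) (hΨ_mul : ∀ a b, Ψ (a * b) = Ψ a * τ b + τ a * Ψ b)
    (hC : ∀ c, Φ (C c) = Ψ (C c)) (hX : ∀ i, Φ (X i) = Ψ (X i)) : Φ = Ψ := by
  funext q
  induction q using MvPolynomial.induction_on with
  | C c => exact hC c
  | add p q hp hq => rw [hΦ_add, hΨ_add, hp, hq]
  | mul_X p i hp => rw [hΦ_mul, hΨ_mul, hp, hX]

section Wronskian

variable {K : Type*} [CommRing K] (δ : K → K) (u : K)

/-- The coefficients of `δ^[k+1] (y 0)` in `y 1, y 2, …` when `δ (y m) = u * y (m + 1)`. -/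
def iterCoeff : ℕ → ℕ → K
  | 0, 0 => u
  | 0, _ + 1 => 0
  | k + 1, 0 => δ (iterCoeff k 0)
  | k + 1, m + 1 => δ (iterCoeff k (m + 1)) + u * iterCoeff k m

variable {δ u}

theorem iterCoeff_of_lt (hδ0 : δ 0 = 0) : ∀ {k m : ℕ}, k < m → iterCoeff δ u k m = 0
  | 0, _ + 1, _ => rfl
  | k + 1, m + 1, h => by
    rw [iterCoeff, iterCoeff_of_lt hδ0 (by omega : k < m + 1),
      iterCoeff_of_lt hδ0 (by omega : k < m), hδ0, mul_zero, add_zero]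

theorem iterCoeff_self (hδ0 : δ 0 = 0) : ∀ k, iterCoeff δ u k k = u ^ (k + 1)
  | 0 => (pow_one u).symm
  | k + 1 => by
    rw [iterCoeff, iterCoeff_of_lt hδ0 k.lt_succ_self, iterCoeff_self hδ0 k, hδ0, zero_add,
      pow_succ' u (k + 1)]

theorem iterate_eq_sum_iterCoeff (hadd : ∀ a b, δ (a + b) = δ a + δ b)
    (hmul : ∀ a b, δ (a * b) = δ a * b + a * δ b) {y : ℕ → K}
    (hy : ∀ m, δ (y m) = u * y (m + 1)) (k : ℕ) :
    δ^[k + 1] (y 0) = ∑ m ∈ Finset.range (k + 1), iterCoeff δ u k m * y (m + 1) := by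
  have hδ0 : δ 0 = 0 := map_zero (AddMonoidHom.mk' δ hadd)
  induction k with
  | zero => simp [iterCoeff, hy]
  | succ k ih =>
    have hterm : ∀ m, δ (iterCoeff δ u k m * y (m + 1)) =
        δ (iterCoeff δ u k m) * y (m + 1) + u * iterCoeff δ u k m * y (m + 1 + 1) := by
      intro m; rw [hmul, hy]; ring
    rw [Function.iterate_succ_apply', ih, ← AddMonoidHom.mk'_apply δ hadd, map_sum]
    simp only [AddMonoidHom.mk'_apply, hterm, Finset.sum_add_distrib]
    rw [Finset.sum_range_succ' _ (k + 1), Finset.sum_range_succ' _ k,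
      Finset.sum_range_succ (fun m => iterCoeff δ u (k + 1) (m + 1) * y (m + 1 + 1)) k,
      Finset.sum_range_succ (fun m => u * iterCoeff δ u k m * y (m + 1 + 1)) k]
    simp only [iterCoeff, add_mul, Finset.sum_add_distrib, mul_assoc,
      iterCoeff_of_lt hδ0 k.lt_succ_self, hδ0, zero_mul]
    abel

theorem det_iterate_eq_prod_mul_det (hadd : ∀ a b, δ (a + b) = δ a + δ b)
    (hmul : ∀ a b, δ (a * b) = δ a * b + a * δ b) {n : ℕ} {y : Fin n → ℕ → K}
    (hy : ∀ b m, δ (y b m) = u * y b (m + 1)) :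
    (Matrix.of fun a b : Fin n => δ^[a + 1] (y b 0)).det =
      (∏ a : Fin n, u ^ ((a : ℕ) + 1)) * (Matrix.of fun a b : Fin n => y b (a + 1)).det := by
  have hδ0 : δ 0 = 0 := map_zero (AddMonoidHom.mk' δ hadd)
  let L : Matrix (Fin n) (Fin n) K := Matrix.of fun a m => iterCoeff δ u a m
  have hL : L.IsLowerTriangular := fun a m hma => iterCoeff_of_lt hδ0 hma
  have hfactor : (Matrix.of fun a b : Fin n => δ^[a + 1] (y b 0)) =
      L * Matrix.of fun a b : Fin n => y b (a + 1) := by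
    ext a b
    rw [Matrix.of_apply, iterate_eq_sum_iterCoeff hadd hmul (hy b), Matrix.mul_apply]
    simp only [L, Matrix.of_apply]
    rw [Fin.sum_univ_eq_sum_range (fun m => iterCoeff δ u a m * y b (m + 1))]
    refine Finset.sum_subset (Finset.range_subset_range.mpr a.isLt) fun m _ hm => ?_
    rw [iterCoeff_of_lt hδ0 (by simpa using hm), zero_mul]
  rw [hfactor, Matrix.det_mul, Matrix.det_of_isLowerTriangular L hL]
  simp only [L, Matrix.of_apply, iterCoeff_self hδ0]

end Wronskian

theorem det_X_succ_ne_zero (C : Type*) [CommRing C] [Nontrivial C] (n : ℕ) :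
    (Matrix.of fun a b : Fin n => (MvPolynomial.X (b, (a : ℕ) + 1) :
      MvPolynomial (Fin n × ℕ) C)).det ≠ 0 := by
  let f : Fin n × Fin n → Fin n × ℕ := fun q => (q.2, (q.1 : ℕ) + 1)
  have hf : Function.Injective f := fun q r h => by
    simp only [f, Prod.mk.injEq, add_left_inj] at h
    exact Prod.ext (Fin.ext h.2) h.1
  have hmap : (Matrix.of fun a b : Fin n => (MvPolynomial.X (b, (a : ℕ) + 1) :
      MvPolynomial (Fin n × ℕ) C)) =
      (MvPolynomial.rename f).toRingHom.mapMatrix (Matrix.mvPolynomialX (Fin n) (Fin n) C) := by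
    ext a b
    simp [Matrix.mvPolynomialX, f]
  rw [hmap, ← RingHom.map_det]
  exact (map_ne_zero_iff _ (MvPolynomial.rename_injective f hf)).mpr
    (Matrix.det_mvPolynomialX_ne_zero (Fin n) C)

theorem Wd_ne_zero {C : Type} [Field C] {n : ℕ} {δ : DRF C n → DRF C n} {u : DRF C n}
    (hadd : ∀ a b, δ (a + b) = δ a + δ b) (hmul : ∀ a b, δ (a * b) = δ a * b + a * δ b)
    (hX : ∀ i k, δ (XX C n i k) = u * XX C n i (k + 1)) (hu : u ≠ 0) :
    Wd δ (n + 1) ≠ 0 := by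
  have hWd : Wd δ (n + 1) = (Matrix.of fun a b : Fin n => δ^[a + 1] (XX C n b 0)).det := by
    simp only [Wd, Fin.is_lt, add_lt_add_iff_right, ite_true]
  rw [hWd, det_iterate_eq_prod_mul_det hadd hmul hX]
  refine mul_ne_zero (Finset.prod_ne_zero_iff.mpr fun a _ => pow_ne_zero _ hu) ?_
  have hdet := (map_ne_zero_iff _ (IsFractionRing.injective (MvPolynomial (Fin n × ℕ) C)
    (DRF C n))).mpr (det_X_succ_ne_zero C n)
  rwa [RingHom.map_det] at hdet

theorem sum_Icc_one_eq_sum_fin {M : Type*} [AddCommMonoid M] (f : ℕ → M) (n : ℕ) :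
    ∑ i ∈ Finset.Icc 1 (n + 1), f i = ∑ r : Fin (n + 1), f (r + 1) := by
  rw [Fin.sum_univ_eq_sum_range (fun r => f (r + 1)), Finset.range_eq_Ico,
    Finset.sum_Ico_add']
  rfl

theorem sum_neg_one_pow_mul_Wd_mul_iterate {C : Type} [Field C] {n : ℕ}
    (δ : DRF C n → DRF C n) (j : Fin n) :
    ∑ i ∈ Finset.Icc 1 (n + 1), (-1 : DRF C n) ^ (n + 1 - i) * Wd δ i * δ^[i] (XX C n j 0) = 0 := by
  let A : Matrix (Fin (n + 1)) (Fin (n + 1)) (DRF C n) := Matrix.of fun r c =>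
    δ^[r + 1] (Fin.lastCases (XX C n j 0) (fun b => XX C n b 0) c)
  have hA : A.det = 0 :=
    Matrix.det_zero_of_column_eq (Fin.castSucc_lt_last j).ne fun r => by simp [A]
  have hminor : ∀ r : Fin (n + 1),
      (A.submatrix r.succAbove (Fin.last n).succAbove).det = Wd δ (r + 1) := by
    intro r
    simp only [Wd, Fin.succAbove_last]
    congr 1
    ext a b
    simp only [A, Matrix.submatrix_apply, Matrix.of_apply, Fin.lastCases_castSucc]
    congr 1
    simp only [Fin.succAbove, Fin.lt_def, Fin.val_castSucc]
    split_ifs <;> simp only [Fin.val_castSucc, Fin.val_succ] <;> omega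
  rw [Matrix.det_succ_column A (Fin.last n)] at hA
  rw [sum_Icc_one_eq_sum_fin, ← hA]
  refine Finset.sum_congr rfl fun r _ => ?_
  have hsign : (-1 : DRF C n) ^ (n + 1 - (r + 1)) = (-1) ^ ((r : ℕ) + (Fin.last n : ℕ)) := by
    rw [Fin.val_last, show (r : ℕ) + n = (n + 1 - (r + 1)) + 2 * r by omega, pow_add, pow_mul,
      neg_one_sq, one_pow, mul_one]
  rw [hsign, hminor]
  simp only [A, Matrix.of_apply, Fin.lastCases_last]
  ring

theorem map_dK_eq_mul_dL {C F : Type} [Field C] [Field F] {n : ℕ} {dF : F → F} {emb : C →+* F}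
    (hemb : ∀ c, dF (emb c) = 0) {dK : DRF C n → DRF C n}
    (hdK_add : ∀ a b, dK (a + b) = dK a + dK b) (hdK_mul : ∀ a b, dK (a * b) = dK a * b + a * dK b)
    (hdK_X : ∀ i k, dK (XX C n i k) = XX C n i (k + 1)) (hdK_C : ∀ c : C, dK (CC C n c) = 0)
    {dL : DRF F n → DRF F n} (hdL_add : ∀ a b, dL (a + b) = dL a + dL b)
    (hdL_mul : ∀ a b, dL (a * b) = dL a * b + a * dL b)
    (hdL_C : ∀ a : F, dL (CC F n a) = CC F n (dF a))
    (τ : DRF C n →+* DRF F n) (u : DRF F n) (hτC : ∀ c, τ (CC C n c) = CC F n (emb c))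
    (hτX : ∀ i k, τ (XX C n i (k + 1)) = u * dL (τ (XX C n i k))) (a : DRF C n) :
    τ (dK a) = u * dL (τ a) := by
  let ιC := algebraMap (MvPolynomial (Fin n × ℕ) C) (DRF C n)
  have hΦ_mul (x y : DRF C n) : τ (dK (x * y)) = τ (dK x) * τ y + τ x * τ (dK y) := by
    rw [hdK_mul, map_add, map_mul, map_mul]
  have hΨ_mul (x y : DRF C n) :
      u * dL (τ (x * y)) = u * dL (τ x) * τ y + τ x * (u * dL (τ y)) := by
    rw [map_mul, hdL_mul]; ring
  refine congrFun (IsFractionRing.twistedDeriv_ext (A := MvPolynomial (Fin n × ℕ) C) τ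
    (Φ := fun a => τ (dK a)) (Ψ := fun a => u * dL (τ a)) hΦ_mul hΨ_mul fun q => ?_) a
  refine congrFun (MvPolynomial.twistedDeriv_ext (τ.comp ιC) (Φ := fun q => τ (dK (ιC q)))
    (Ψ := fun q => u * dL (τ (ιC q))) ?_ ?_ ?_ ?_ ?_ ?_) q
  · intro x y; simp only [map_add, hdK_add]
  · intro x y; simp only [map_mul, RingHom.comp_apply, hΦ_mul]
  · intro x y; simp only [map_add, hdL_add, mul_add]
  · intro x y; simp only [map_mul ιC, RingHom.comp_apply, hΨ_mul]
  · intro c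
    change τ (dK (CC C n c)) = u * dL (τ (CC C n c))
    rw [hdK_C, hτC, hdL_C, hemb, map_zero, map_zero, mul_zero]
  · intro q
    change τ (dK (XX C n q.1 q.2)) = u * dL (τ (XX C n q.1 q.2))
    rw [hdK_X, hτX]

theorem iterate_sum_const_mul {C L : Type*} [Semiring C] [Ring L] {D : L → L}
    (κ : C →+* L) (hadd : ∀ a b, D (a + b) = D a + D b)
    (hmul : ∀ c y, D (κ c * y) = κ c * D y) {ι : Type*} (s : Finset ι) (e : ι → C)
    (z : ι → L) (k : ℕ) :
    D^[k] (∑ i ∈ s, κ (e i) * z i) = ∑ i ∈ s, κ (e i) * D^[k] (z i) := by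
  induction k with
  | zero => rfl
  | succ k ih =>
    have hsum := map_sum (AddMonoidHom.mk' D hadd) (fun i => κ (e i) * D^[k] (z i)) s
    simp only [AddMonoidHom.mk'_apply] at hsum
    simp only [Function.iterate_succ_apply', ih, hsum, hmul]

theorem map_iterate_succ_eq_sum {C K L : Type*} [Semiring C] [Semiring K] [Ring L] {δ : K → K}
    {D : L → L} (κ : C →+* L) (hadd : ∀ a b, D (a + b) = D a + D b)
    (hmul : ∀ c y, D (κ c * y) = κ c * D y) (hconst : ∀ c, D (κ c) = 0)
    {τ ι : K →+* L} (hτ : Function.Semiconj τ δ D) (hι : Function.Semiconj ι δ D)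
    {m : Type*} [Fintype m] {x : m → K} {h : Matrix m m C} {h₀ : m → C}
    (hτx : ∀ b, τ (x b) = ∑ c, κ (h b c) * ι (x c) + κ (h₀ b)) (b : m) (k : ℕ) :
    τ (δ^[k + 1] (x b)) = ∑ c, κ (h b c) * ι (δ^[k + 1] (x c)) := by
  have hD : D (∑ c, κ (h b c) * ι (x c)) = ∑ c, κ (h b c) * ι (δ (x c)) := by
    simp only [hι.eq]
    exact iterate_sum_const_mul κ hadd hmul Finset.univ (h b) (fun c => ι (x c)) 1
  rw [(hτ.iterate_right (k + 1)) _, hτx, Function.iterate_succ_apply, hadd, hconst, add_zero, hD,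
    iterate_sum_const_mul κ hadd hmul]
  refine Finset.sum_congr rfl fun c _ => ?_
  rw [← (hι.iterate_right k) _, ← Function.iterate_succ_apply]

theorem map_Wd_eq {C F : Type} [Field C] [Field F] {n : ℕ} {δ : DRF C n → DRF C n}
    (κ : C →+* DRF F n) {τ ι : DRF C n →+* DRF F n} {h : Matrix (Fin n) (Fin n) C}
    (hτ : ∀ b k, τ (δ^[k + 1] (XX C n b 0)) = ∑ c, κ (h b c) * ι (δ^[k + 1] (XX C n c 0)))
    (i : ℕ) : τ (Wd δ i) = ι (Wd δ i) * κ h.det := by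
  rw [Wd, RingHom.map_det, RingHom.map_det, ← Matrix.det_transpose h, RingHom.map_det,
    ← Matrix.det_mul]
  congr 1
  ext a b
  obtain ⟨k, hk⟩ : ∃ k, (if (a : ℕ) + 1 < i then (a : ℕ) + 1 else (a : ℕ) + 2) = k + 1 := by
    split_ifs <;> exact ⟨_, rfl⟩
  simp only [RingHom.mapMatrix_apply, Matrix.map_apply, Matrix.of_apply, Matrix.mul_apply,
    Matrix.transpose_apply, hk, hτ, mul_comm]

theorem map_Wd_div_Wd_of_isSubst {C F : Type} [Field C] [Field F] {n : ℕ} {dF : F → F}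
    {emb : C →+* F} (hconst : Set.range emb = {a : F | dF a = 0}) {dK : DRF C n → DRF C n}
    (hdK_add : ∀ a b, dK (a + b) = dK a + dK b) (hdK_mul : ∀ a b, dK (a * b) = dK a * b + a * dK b)
    (hdK_X : ∀ i k, dK (XX C n i k) = XX C n i (k + 1)) (hdK_C : ∀ c : C, dK (CC C n c) = 0)
    {dL : DRF F n → DRF F n} (hdL_add : ∀ a b, dL (a + b) = dL a + dL b)
    (hdL_mul : ∀ a b, dL (a * b) = dL a * b + a * dL b)
    (hdL_X : ∀ i k, dL (XX F n i k) = XX F n i (k + 1))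
    (hdL_C : ∀ a : F, dL (CC F n a) = CC F n (dF a))
    {ι : DRF C n →+* DRF F n} (hι_C : ∀ c : C, ι (CC C n c) = CC F n (emb c))
    (hι_X : ∀ i k, ι (XX C n i k) = XX F n i k) {p : DRF C n} {δ : DRF C n → DRF C n}
    (hδ : ∀ a, δ a = p⁻¹ * dK a) {g : F} (hg : g ≠ 0) {h : Matrix (Fin n) (Fin n) C}
    (hh : IsUnit h.det) {h₀ : Fin n → C} {τ : DRF C n →+* DRF F n}
    (hτ : IsSubst C F n emb dL g h h₀ τ) (hτp : τ p = (CC F n g)⁻¹ * ι p) (i j : ℕ) :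
    τ (Wd δ i / Wd δ j) = ι (Wd δ i / Wd δ j) := by
  have hemb (c : C) : dF (emb c) = 0 := (hconst ▸ Set.mem_range_self c :)
  have hdK_eq := map_dK_eq_mul_dL hemb hdK_add hdK_mul hdK_X hdK_C hdL_add hdL_mul hdL_C
  let κ := (CC F n).comp emb
  let D : DRF F n → DRF F n := fun b => (ι p)⁻¹ * dL b
  have hD_add (a b : DRF F n) : D (a + b) = D a + D b := by simp only [D, hdL_add, mul_add]
  have hD_mul (c : C) (y : DRF F n) : D (κ c * y) = κ c * D y := by
    simp only [D, κ, RingHom.comp_apply, hdL_mul, hdL_C, hemb, map_zero]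
    ring
  have hD_const (c : C) : D (κ c) = 0 := by simp only [D, κ, RingHom.comp_apply, hdL_C, hemb,
    map_zero, mul_zero]
  have hιD : Function.Semiconj ι δ D := fun a => by
    rw [hδ, map_mul, map_inv₀, hdK_eq ι 1 hι_C fun i k => by rw [hι_X, hι_X, hdL_X, one_mul],
      one_mul]
  have hτD : Function.Semiconj τ δ D := fun a => by
    have hgC : CC F n g ≠ 0 := (map_ne_zero _).mpr hg
    rw [hδ, map_mul, map_inv₀, hτp, hdK_eq τ (CC F n g)⁻¹ hτ.1 fun i k => by
      rw [hτ.2, hτ.2, Function.iterate_succ_apply']]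
    simp only [D]
    field_simp
  have hτx (b : Fin n) : τ (XX C n b 0) = ∑ c, κ (h b c) * ι (XX C n c 0) + κ (h₀ b) := by
    simp only [hτ.2, hι_X, κ, RingHom.comp_apply, Function.iterate_zero_apply]
  have hκ : κ h.det ≠ 0 := (map_ne_zero κ).mpr hh.ne_zero
  have hτW := map_Wd_eq (δ := δ) κ (map_iterate_succ_eq_sum κ hD_add hD_mul hD_const hτD hιD hτx)
  rw [map_div₀, map_div₀, hτW, hτW, mul_div_mul_right _ _ hκ]

theorem MvPolynomial.sum_C_mul_X_ne_zero {R σ : Type*} [CommSemiring R] {s : Finset σ}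
    {a : σ → R} {i : σ} (hi : i ∈ s) (ha : a i ≠ 0) : ∑ j ∈ s, C (a j) * X j ≠ 0 := by
  classical
  intro hq
  have hcoeff := congrArg (coeff (Finsupp.single i 1)) hq
  simp only [coeff_sum, coeff_C_mul, coeff_X, Finsupp.single_left_inj one_ne_zero, mul_ite,
    mul_one, mul_zero, Finset.sum_ite_eq', if_pos hi, coeff_zero] at hcoeff
  exact ha hcoeff

theorem MvPolynomial.map_coeff_sum_C_mul_X {R S σ : Type*} [CommSemiring R] [CommSemiring S]
    {f g : R →+* S} {s : Finset σ} {a : σ → R} (h : ∀ j ∈ s, f (a j) = g (a j))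
    (m : σ →₀ ℕ) :
    f ((∑ j ∈ s, C (a j) * X j).coeff m) = g ((∑ j ∈ s, C (a j) * X j).coeff m) := by
  rw [← coeff_map, ← coeff_map]
  congr 1
  simp only [map_sum, map_mul, map_C, map_X]
  exact Finset.sum_congr rfl fun j hj => by rw [h j hj]

theorem stmt_12_general (C F : Type) [Field C] [Field F]
    (dF : F → F)
    (emb : C →+* F)
    (hconst : Set.range emb = {a : F | dF a = 0})
    (n : ℕ)
    (dK : DRF C n → DRF C n)
    (hdK_add : ∀ a b, dK (a + b) = dK a + dK b)
    (hdK_mul : ∀ a b, dK (a * b) = dK a * b + a * dK b)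
    (hdK_X : ∀ i k, dK (XX C n i k) = XX C n i (k + 1))
    (hdK_C : ∀ c : C, dK (CC C n c) = 0)
    (dL : DRF F n → DRF F n)
    (hdL_add : ∀ a b, dL (a + b) = dL a + dL b)
    (hdL_mul : ∀ a b, dL (a * b) = dL a * b + a * dL b)
    (hdL_X : ∀ i k, dL (XX F n i k) = XX F n i (k + 1))
    (hdL_C : ∀ a : F, dL (CC F n a) = CC F n (dF a))
    (ι : DRF C n →+* DRF F n)
    (hι_C : ∀ c : C, ι (CC C n c) = CC F n (emb c))
    (hι_X : ∀ i k, ι (XX C n i k) = XX F n i k)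
    (H : Set (Matrix (Fin n) (Fin n) C × (Fin n → C)))
    (hH_GL : ∀ q ∈ H, IsUnit q.1.det)
    (p : DRF C n) (hp0 : p ≠ 0)
    (hp_inv : ∀ (g : F), g ≠ 0 → ∀ (h : Matrix (Fin n) (Fin n) C), IsUnit h.det →
      ∀ (h₀ : Fin n → C), ∀ τ : DRF C n →+* DRF F n,
      IsSubst C F n emb dL g h h₀ τ → τ p = (CC F n g)⁻¹ * ι p)
    (δ : DRF C n → DRF C n) (hδ : ∀ a, δ a = p⁻¹ * dK a) :
    -- (i) each `xⱼ` solves the linear `δ`-differential equation with invariant coefficients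
    (∀ j : Fin n,
      ∑ i ∈ Finset.Icc 1 (n + 1),
        (-1 : DRF C n) ^ (n + 1 - i) * (Wd δ i / Wd δ (n + 1)) * δ^[i] (XX C n j 0) = 0) ∧
    -- (ii) the coefficients `W^δ_i/W^δ` are `(F*, GL(n,C)⋉Cⁿ)`-invariant
    (∀ i ∈ Finset.Icc 1 (n + 1),
      ∀ (g : F), g ≠ 0 → ∀ (h : Matrix (Fin n) (Fin n) C), IsUnit h.det →
      ∀ (h₀ : Fin n → C), ∀ τ : DRF C n →+* DRF F n,
        IsSubst C F n emb dL g h h₀ τ →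
        τ (Wd δ i / Wd δ (n + 1)) = ι (Wd δ i / Wd δ (n + 1))) ∧
    -- (iii) each `xⱼ` is `δ`-differentially algebraic over `C⟨x,d⟩^{(F*,H)}`
    (∀ j : Fin n,
      ∃ q : MvPolynomial ℕ (DRF C n), q ≠ 0 ∧
        (∀ mono, MvPolynomial.coeff mono q ∈
          {f : DRF C n | ∀ (g : F), g ≠ 0 → ∀ r ∈ H, ∀ τ : DRF C n →+* DRF F n,
            IsSubst C F n emb dL g r.1 r.2 τ → τ f = ι f}) ∧
        MvPolynomial.eval (fun k => δ^[k] (XX C n j 0)) q = 0) := by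
  have hrel (j : Fin n) : ∑ i ∈ Finset.Icc 1 (n + 1),
      (-1 : DRF C n) ^ (n + 1 - i) * (Wd δ i / Wd δ (n + 1)) * δ^[i] (XX C n j 0) = 0 := by
    rw [← zero_div (Wd δ (n + 1)), ← sum_neg_one_pow_mul_Wd_mul_iterate δ j, Finset.sum_div]
    exact Finset.sum_congr rfl fun i _ => by ring
  have hinv (i : ℕ) (g : F) (hg : g ≠ 0) (h : Matrix (Fin n) (Fin n) C) (hh : IsUnit h.det)
      (h₀ : Fin n → C) (τ : DRF C n →+* DRF F n) (hτ : IsSubst C F n emb dL g h h₀ τ) :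
      τ (Wd δ i / Wd δ (n + 1)) = ι (Wd δ i / Wd δ (n + 1)) :=
    map_Wd_div_Wd_of_isSubst hconst hdK_add hdK_mul hdK_X hdK_C hdL_add hdL_mul hdL_X hdL_C hι_C
      hι_X hδ hg hh hτ (hp_inv g hg h hh h₀ τ hτ) i (n + 1)
  have hW : Wd δ (n + 1) ≠ 0 :=
    Wd_ne_zero (fun a b => by simp only [hδ, hdK_add, mul_add])
      (fun a b => by simp only [hδ, hdK_mul]; ring) (fun i k => by rw [hδ, hdK_X])
      (inv_ne_zero hp0)
  let a (i : ℕ) : DRF C n := (-1) ^ (n + 1 - i) * (Wd δ i / Wd δ (n + 1))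
  refine ⟨hrel, fun i _ => hinv i, fun j => ⟨∑ i ∈ Finset.Icc 1 (n + 1),
    MvPolynomial.C (a i) * MvPolynomial.X i, ?_, fun mono g hg r hr τ hτ =>
    MvPolynomial.map_coeff_sum_C_mul_X (fun i _ => ?_) mono, ?_⟩⟩
  · exact MvPolynomial.sum_C_mul_X_ne_zero (Finset.right_mem_Icc.mpr n.succ_pos) (by simp [a, hW])
  · simp only [a, map_mul, map_pow, map_neg, map_one, hinv i g hg r.1 (hH_GL r hr) r.2 τ hτ]
  · simpa using hrel j

/-- each coordinate `xⱼ` satisfies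
`Σ_{i=1}^{n+1} (−1)^{n+1−i} (W^δ_i/W^δ) δⁱxⱼ = 0`, the coefficients `W^δ_i/W^δ` are
`(F*, GL(n,C)⋉Cⁿ)`-invariant, and hence each `xⱼ` is `δ`-differentially algebraic over
`(C⟨x,d⟩^{(F*,H)}, δ)` for any subgroup `H ≤ GL(n,C)⋉Cⁿ`. -/
theorem stmt_12 (C F : Type) [Field C] [Field F] [CharZero F]
    (dF : F → F)
    (hdF_add : ∀ a b : F, dF (a + b) = dF a + dF b)
    (hdF_mul : ∀ a b : F, dF (a * b) = dF a * b + a * dF b)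
    (emb : C →+* F)
    (hconst : Set.range emb = {a : F | dF a = 0})
    (hCF : ∃ a : F, dF a ≠ 0)
    (n : ℕ) (hn : 1 < n)
    (dK : DRF C n → DRF C n)
    (hdK_add : ∀ a b, dK (a + b) = dK a + dK b)
    (hdK_mul : ∀ a b, dK (a * b) = dK a * b + a * dK b)
    (hdK_X : ∀ i k, dK (XX C n i k) = XX C n i (k + 1))
    (hdK_C : ∀ c : C, dK (CC C n c) = 0)
    (dL : DRF F n → DRF F n)
    (hdL_add : ∀ a b, dL (a + b) = dL a + dL b)
    (hdL_mul : ∀ a b, dL (a * b) = dL a * b + a * dL b)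
    (hdL_X : ∀ i k, dL (XX F n i k) = XX F n i (k + 1))
    (hdL_C : ∀ a : F, dL (CC F n a) = CC F n (dF a))
    (ι : DRF C n →+* DRF F n)
    (hι_C : ∀ c : C, ι (CC C n c) = CC F n (emb c))
    (hι_X : ∀ i k, ι (XX C n i k) = XX F n i k)
    (H : Set (Matrix (Fin n) (Fin n) C × (Fin n → C)))
    (hH_GL : ∀ q ∈ H, IsUnit q.1.det)
    (hH_one : ((1 : Matrix (Fin n) (Fin n) C), (0 : Fin n → C)) ∈ H)
    (hH_mul : ∀ q ∈ H, ∀ r ∈ H, (q.1 * r.1, q.1.mulVec r.2 + q.2) ∈ H)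
    (hH_inv : ∀ q ∈ H, ∃ r ∈ H, q.1 * r.1 = 1 ∧ q.1.mulVec r.2 + q.2 = 0)
    (p : DRF C n) (hp0 : p ≠ 0)
    (hp_inv : ∀ (g : F), g ≠ 0 → ∀ (h : Matrix (Fin n) (Fin n) C), IsUnit h.det →
      ∀ (h₀ : Fin n → C), ∀ τ : DRF C n →+* DRF F n,
      IsSubst C F n emb dL g h h₀ τ → τ p = (CC F n g)⁻¹ * ι p)
    (δ : DRF C n → DRF C n) (hδ : ∀ a, δ a = p⁻¹ * dK a) :
    -- (i) each `xⱼ` solves the linear `δ`-differential equation with invariant coefficients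
    (∀ j : Fin n,
      ∑ i ∈ Finset.Icc 1 (n + 1),
        (-1 : DRF C n) ^ (n + 1 - i) * (Wd δ i / Wd δ (n + 1)) * δ^[i] (XX C n j 0) = 0) ∧
    -- (ii) the coefficients `W^δ_i/W^δ` are `(F*, GL(n,C)⋉Cⁿ)`-invariant
    (∀ i ∈ Finset.Icc 1 (n + 1),
      ∀ (g : F), g ≠ 0 → ∀ (h : Matrix (Fin n) (Fin n) C), IsUnit h.det →
      ∀ (h₀ : Fin n → C), ∀ τ : DRF C n →+* DRF F n,
        IsSubst C F n emb dL g h h₀ τ →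
        τ (Wd δ i / Wd δ (n + 1)) = ι (Wd δ i / Wd δ (n + 1))) ∧
    -- (iii) each `xⱼ` is `δ`-differentially algebraic over `C⟨x,d⟩^{(F*,H)}`
    (∀ j : Fin n,
      ∃ q : MvPolynomial ℕ (DRF C n), q ≠ 0 ∧
        (∀ mono, MvPolynomial.coeff mono q ∈
          {f : DRF C n | ∀ (g : F), g ≠ 0 → ∀ r ∈ H, ∀ τ : DRF C n →+* DRF F n,
            IsSubst C F n emb dL g r.1 r.2 τ → τ f = ι f}) ∧
        MvPolynomial.eval (fun k => δ^[k] (XX C n j 0)) q = 0) :=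
  stmt_12_general C F dF emb hconst n dK hdK_add hdK_mul hdK_X hdK_C dL hdL_add hdL_mul hdL_X hdL_C
    ι hι_C hι_X H hH_GL p hp0 hp_inv δ hδ
end

section
/- Let C be a field of characteristic zero and x₁,...,xₙ differential indeterminates over C with derivation d. The n(n+1) + n elements of the system x, dx, d²x, ..., dⁿx (i.e., dʲxᵢ for 0 ≤ j ≤ n, 1 ≤ i ≤ n) are algebraically independent over the invariant field C⟨x,d⟩^{GL(n,C)⋉Cⁿ}. -/
/-- `σ : C⟨x,d⟩ → C⟨x,d⟩` is the substitution `x ↦ hx+h₀` (fixing `d`). -/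
def IsSubstH (C : Type) [Field C] (n : ℕ)
    (h : Matrix (Fin n) (Fin n) C) (h₀ : Fin n → C)
    (σ : DRF C n →+* DRF C n) : Prop :=
  (∀ c : C, σ (CC C n c) = CC C n c) ∧
  (∀ (i : Fin n) (k : ℕ),
    σ (XX C n i k) = (∑ j, CC C n (h i j) * XX C n j k)
      + (if k = 0 then CC C n (h₀ i) else 0))

open MvPolynomial Matrix

theorem MvPolynomial.eq_zero_of_forall_eval_comp_eq_zero {R K σ : Type*} [Infinite R]
    [CommRing K] [IsDomain K] {ι : R → K} (hι : Function.Injective ι) {p : MvPolynomial σ K}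
    (h : ∀ g : σ → R, eval (ι ∘ g) p = 0) : p = 0 := by
  refine funext_set (fun _ => Set.range ι) (fun _ => Set.infinite_range_of_injective hι)
    fun x hx => ?_
  choose g hg using fun i => hx i (Set.mem_univ i)
  rw [map_zero, ← h g]
  exact congrArg (eval · p) (_root_.funext hg).symm

theorem MvPolynomial.eval_comp_of_forall_map_coeff {K σ : Type*} [CommSemiring K]
    (φ : K →+* K) {p : MvPolynomial σ K} (hp : ∀ m, φ (coeff m p) = coeff m p) (x : σ → K) :
    eval (φ ∘ x) p = φ (eval x p) := by
  have hmap : map φ p = p := by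
    ext m
    rw [coeff_map, hp]
  calc eval (φ ∘ x) p = eval (φ ∘ x) (map φ p) := by rw [hmap]
    _ = eval₂ φ (φ ∘ x) p := eval_map _ _ _
    _ = φ (eval x p) := (eval₂_comp_left φ (RingHom.id K) x p).symm

theorem Function.iterate_apply_eq_of_shift {α ι : Type*} {d : α → α} {x : ι → ℕ → α}
    (hd : ∀ i k, d (x i k) = x i (k + 1)) (i : ι) (k : ℕ) : d^[k] (x i 0) = x i k := by
  induction k with
  | zero => rfl
  | succ k ih => rw [Function.iterate_succ_apply', ih, hd]

section AffineSubst

variable {R : Type*} [CommRing R] {n : ℕ}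

noncomputable def affineSubst (h : Matrix (Fin n) (Fin n) R) (h₀ : Fin n → R) :
    MvPolynomial (Fin n × ℕ) R →ₐ[R] MvPolynomial (Fin n × ℕ) R :=
  aeval fun p => (∑ j, C (h p.1 j) * X (j, p.2))
    + if p.2 = 0 then C (h₀ p.1) else 0

theorem affineSubst_X (h : Matrix (Fin n) (Fin n) R) (h₀ : Fin n → R) (i : Fin n) (k : ℕ) :
    affineSubst h h₀ (X (i, k)) = (∑ j, C (h i j) * X (j, k))
      + if k = 0 then C (h₀ i) else 0 :=
  aeval_X _ _

theorem affineSubst_comp (h h' : Matrix (Fin n) (Fin n) R) (h₀ h₀' : Fin n → R) :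
    (affineSubst h' h₀').comp (affineSubst h h₀) = affineSubst (h * h') (h *ᵥ h₀' + h₀) := by
  refine algHom_ext fun ⟨i, k⟩ => ?_
  simp only [AlgHom.comp_apply, affineSubst_X, map_add, map_sum, algHom_C,
    apply_ite (affineSubst h' h₀'), map_zero, Matrix.mul_apply, Matrix.mulVec, dotProduct,
    Pi.add_apply, Finset.mul_sum, Finset.sum_mul, mul_add, Finset.sum_add_distrib, map_mul]
  rw [Finset.sum_comm]
  by_cases hk : k = 0 <;> simp [hk, mul_assoc, add_assoc]

theorem affineSubst_one_zero : affineSubst (1 : Matrix (Fin n) (Fin n) R) 0 = AlgHom.id R _ := by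
  refine algHom_ext fun ⟨i, k⟩ => ?_
  simp [affineSubst_X, Matrix.one_apply]

theorem affineSubst_injective {h : Matrix (Fin n) (Fin n) R} (hu : IsUnit h.det)
    (h₀ : Fin n → R) : Function.Injective (affineSubst h h₀) := by
  have hinv : (affineSubst h⁻¹ (-(h⁻¹ *ᵥ h₀))).comp (affineSubst h h₀) = AlgHom.id R _ := by
    rw [affineSubst_comp, Matrix.mul_nonsing_inv h hu, Matrix.mulVec_neg, Matrix.mulVec_mulVec,
      Matrix.mul_nonsing_inv h hu, Matrix.one_mulVec, neg_add_cancel, affineSubst_one_zero]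
  exact Function.LeftInverse.injective (g := affineSubst h⁻¹ (-(h⁻¹ *ᵥ h₀)))
    fun p => congrArg (· p) hinv

end AffineSubst

section AffineImage

variable {n : ℕ}

/-- `w` packs a matrix `H` (`Sum.inl`) and a vector `H₀` (`Sum.inr`); the columns `x₀, …, xₙ`
of `x` are sent to `(H x₀ + H₀, H x₁, …, H xₙ)`. -/
def affineImage {R : Type*} [CommSemiring R] (w : (Fin n × Fin n) ⊕ Fin n → R)
    (x : Fin n × Fin (n + 1) → R) : Fin n × Fin (n + 1) → R :=
  fun p => (∑ j, w (Sum.inl (p.1, j)) * x (j, p.2)) + if (p.2 : ℕ) = 0 then w (Sum.inr p.1) else 0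

theorem map_affineImage {R S : Type*} [CommSemiring R] [CommSemiring S] (f : R →+* S)
    (w : (Fin n × Fin n) ⊕ Fin n → R) (x : Fin n × Fin (n + 1) → R) (p : Fin n × Fin (n + 1)) :
    f (affineImage w x p) = affineImage (f ∘ w) (f ∘ x) p := by
  simp [affineImage, apply_ite f]

theorem exists_affineImage_eq {K : Type*} [Field K] (x : Fin n × Fin (n + 1) → K)
    (hx : IsUnit (Matrix.of fun j l : Fin n => x (j, l.succ)).det)
    (y : Fin n × Fin (n + 1) → K) : ∃ w, affineImage w x = y := by
  set M := Matrix.of fun j l : Fin n => x (j, l.succ)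
  set N := (Matrix.of fun i l : Fin n => y (i, l.succ)) * M⁻¹
  refine ⟨Sum.elim (fun ij => N ij.1 ij.2) fun i => y (i, 0) - ∑ j, N i j * x (j, 0), ?_⟩
  funext ⟨i, k⟩
  induction k using Fin.cases with
  | zero => simp [affineImage]
  | succ l =>
    have hNM : N * M = Matrix.of fun i l : Fin n => y (i, l.succ) := by
      rw [Matrix.mul_assoc, Matrix.nonsing_inv_mul M hx, Matrix.mul_one]
    simpa [affineImage, Matrix.mul_apply, M] using congrFun (congrFun hNM i) l

noncomputable def genericAffine {K : Type*} [CommSemiring K] (x : Fin n × Fin (n + 1) → K) :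
    MvPolynomial (Fin n × Fin (n + 1)) K →ₐ[K] MvPolynomial ((Fin n × Fin n) ⊕ Fin n) K :=
  bind₁ (affineImage X (MvPolynomial.C ∘ x))

theorem eval_genericAffine {K : Type*} [CommSemiring K] (x : Fin n × Fin (n + 1) → K)
    (w : (Fin n × Fin n) ⊕ Fin n → K) (q : MvPolynomial (Fin n × Fin (n + 1)) K) :
    eval w (genericAffine x q) = eval (affineImage w x) q := by
  rw [genericAffine, eval, eval₂Hom_bind₁]
  congr 2
  funext p
  rw [← eval, map_affineImage]
  congr 1 <;> funext <;> simp

theorem eq_zero_of_genericAffine_eq_zero {K : Type*} [Field K] [Infinite K]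
    {x : Fin n × Fin (n + 1) → K} (hx : IsUnit (Matrix.of fun j l : Fin n => x (j, l.succ)).det)
    {q : MvPolynomial (Fin n × Fin (n + 1)) K} (hq : genericAffine x q = 0) : q = 0 :=
  MvPolynomial.funext fun y => by
    obtain ⟨w, rfl⟩ := exists_affineImage_eq x hx y
    rw [← eval_genericAffine, hq, map_zero, map_zero]

end AffineImage

section DifferentialRationalFunctions

variable (C : Type) [Field C] (n : ℕ)

def affineInvariants : Set (DRF C n) :=
  {f | ∀ (h : Matrix (Fin n) (Fin n) C), IsUnit h.det →
    ∀ (h₀ : Fin n → C), ∀ σ : DRF C n →+* DRF C n, IsSubstH C n h h₀ σ → σ f = f}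

theorem CC_injective : Function.Injective (CC C n) :=
  (IsFractionRing.injective (MvPolynomial (Fin n × ℕ) C) (DRF C n)).comp (C_injective _ _)

theorem isUnit_det_XX_succ : IsUnit (Matrix.of fun j l : Fin n => XX C n j (l.succ : ℕ)).det := by
  let e : Fin n × Fin n → Fin n × ℕ := fun p => (p.1, p.2 + 1)
  have he : Function.Injective e := fun p q hpq => by
    simp only [e, Prod.mk.injEq, add_left_inj] at hpq
    exact Prod.ext hpq.1 (Fin.ext hpq.2)
  have hdet : (Matrix.of fun j l : Fin n => XX C n j (l.succ : ℕ)).det =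
      algebraMap _ (DRF C n) (rename e (mvPolynomialX (Fin n) (Fin n) C).det) := by
    rw [← RingHom.coe_coe (rename e), ← RingHom.comp_apply, RingHom.map_det]
    congr 1
    ext j l
    simp [XX, e]
  rw [hdet, isUnit_iff_ne_zero, map_ne_zero_iff _ (IsFractionRing.injective _ _),
    map_ne_zero_iff _ (rename_injective e he)]
  exact det_mvPolynomialX_ne_zero _ _

theorem exists_isSubstH {h : Matrix (Fin n) (Fin n) C} (hu : IsUnit h.det) (h₀ : Fin n → C) :
    ∃ σ, IsSubstH C n h h₀ σ := by
  have hinj : Function.Injective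
      ((algebraMap (MvPolynomial (Fin n × ℕ) C) (DRF C n)).comp (affineSubst h h₀).toRingHom) :=
    (IsFractionRing.injective _ (DRF C n)).comp (affineSubst_injective hu h₀)
  refine ⟨IsFractionRing.lift hinj, fun c => ?_, fun i k => ?_⟩
  · simp [CC, IsFractionRing.lift_algebraMap]
  · simp [XX, CC, IsFractionRing.lift_algebraMap, affineSubst_X, apply_ite (algebraMap _ _)]

theorem genericAffine_eq_zero [Infinite C] {q : MvPolynomial (Fin n × Fin (n + 1)) (DRF C n)}
    (hq : ∀ m, coeff m q ∈ affineInvariants C n)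
    (hx : eval (fun p : Fin n × Fin (n + 1) => XX C n p.1 p.2) q = 0) :
    genericAffine (fun p => XX C n p.1 p.2) q = 0 := by
  set D : MvPolynomial ((Fin n × Fin n) ⊕ Fin n) (DRF C n) :=
    rename Sum.inl (mvPolynomialX (Fin n) (Fin n) (DRF C n)).det
  have hD : D ≠ 0 := (map_ne_zero_iff _ (rename_injective _ Sum.inl_injective)).2
    (det_mvPolynomialX_ne_zero _ _)
  suffices genericAffine (fun p => XX C n p.1 p.2) q * D = 0 from
    (mul_eq_zero.1 this).resolve_right hD
  refine eq_zero_of_forall_eval_comp_eq_zero (CC_injective C n) fun g => ?_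
  set h : Matrix (Fin n) (Fin n) C := Matrix.of fun i j => g (Sum.inl (i, j))
  have hDg : eval (CC C n ∘ g) D = CC C n h.det := by
    rw [eval_rename, eval_det_mvPolynomialX, RingHom.map_det]
    rfl
  rw [map_mul, hDg]
  by_cases hu : IsUnit h.det
  · obtain ⟨σ, hσ⟩ := exists_isSubstH C n hu (g ∘ Sum.inr)
    have hσx : affineImage (CC C n ∘ g) (fun p => XX C n p.1 p.2) = σ ∘ fun p => XX C n p.1 p.2 :=
      funext fun p => (hσ.2 p.1 p.2).symm
    rw [eval_genericAffine, hσx, eval_comp_of_forall_map_coeff σ (fun m => hq m h hu _ σ hσ), hx,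
      map_zero, zero_mul]
  · rw [isUnit_iff_ne_zero, not_not] at hu
    rw [hu, map_zero, mul_zero]

end DifferentialRationalFunctions

theorem stmt_13_general (C : Type) [Field C] [CharZero C]
    (n : ℕ)
    (dK : DRF C n → DRF C n)
    (hdK_X : ∀ i k, dK (XX C n i k) = XX C n i (k + 1)) :
    ∀ q : MvPolynomial (Fin n × Fin (n + 1)) (DRF C n),
      (∀ mono, MvPolynomial.coeff mono q ∈
        {f : DRF C n | ∀ (h : Matrix (Fin n) (Fin n) C), IsUnit h.det →
          ∀ (h₀ : Fin n → C), ∀ σ : DRF C n →+* DRF C n,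
            IsSubstH C n h h₀ σ → σ f = f}) →
      MvPolynomial.eval (fun pr : Fin n × Fin (n + 1) =>
        dK^[(pr.2 : ℕ)] (XX C n pr.1 0)) q = 0 →
      q = 0 := by
  intro q hq hdq
  have : Infinite (DRF C n) := Infinite.of_injective _ (CC_injective C n)
  simp only [Function.iterate_apply_eq_of_shift hdK_X] at hdq
  exact eq_zero_of_genericAffine_eq_zero (isUnit_det_XX_succ C n) (genericAffine_eq_zero C n hq hdq)

/-- the `n(n+1)+n` elements `x, dx, d²x, …, dⁿx` (i.e. `dʲxᵢ` for
`0 ≤ j ≤ n`, `1 ≤ i ≤ n`) are algebraically independent over the invariant field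
`C⟨x,d⟩^{GL(n,C)⋉Cⁿ}`: any polynomial with `GL(n,C)⋉Cⁿ`-invariant coefficients
vanishing at them is the zero polynomial. -/
theorem stmt_13 (C : Type) [Field C] [CharZero C]
    (n : ℕ) (hn : 1 < n)
    (dK : DRF C n → DRF C n)
    (hdK_add : ∀ a b, dK (a + b) = dK a + dK b)
    (hdK_mul : ∀ a b, dK (a * b) = dK a * b + a * dK b)
    (hdK_X : ∀ i k, dK (XX C n i k) = XX C n i (k + 1))
    (hdK_C : ∀ c : C, dK (CC C n c) = 0) :
    ∀ q : MvPolynomial (Fin n × Fin (n + 1)) (DRF C n),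
      (∀ mono, MvPolynomial.coeff mono q ∈
        {f : DRF C n | ∀ (h : Matrix (Fin n) (Fin n) C), IsUnit h.det →
          ∀ (h₀ : Fin n → C), ∀ σ : DRF C n →+* DRF C n,
            IsSubstH C n h h₀ σ → σ f = f}) →
      MvPolynomial.eval (fun pr : Fin n × Fin (n + 1) =>
        dK^[(pr.2 : ℕ)] (XX C n pr.1 0)) q = 0 →
      q = 0 :=
  stmt_13_general C n dK hdK_X
end

section
/- Let C be a field of characteristic zero and x₁,...,xₙ differential indeterminates. Then C⟨x,d⟩ = C⟨x,d⟩^{GL(n,C)⋉Cⁿ}(x, dx, d²x, ..., dⁿx), i.e., the whole differential rational function field is generated as an ordinary field over the affine-invariant subfield by x and its derivatives up to order n. -/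
open Matrix

lemma RingHom.map_inv_mulVec_eq_of_map_eq_mul {ι R : Type*} [Fintype ι] [DecidableEq ι]
    [CommRing R] (σ : R →+* R) {A H : Matrix ι ι R} {v : ι → R} (hA : IsUnit A.det)
    (hσA : A.map σ = H * A) (hσv : σ ∘ v = H *ᵥ v) (i : ι) :
    σ ((A⁻¹ *ᵥ v) i) = (A⁻¹ *ᵥ v) i := by
  have hσAinv : A⁻¹.map σ * H = A⁻¹ :=
    calc A⁻¹.map σ * H = A⁻¹.map σ * (H * A) * A⁻¹ := by
          rw [mul_assoc, mul_assoc H, mul_nonsing_inv A hA, mul_one]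
      _ = (A⁻¹ * A).map σ * A⁻¹ := by rw [← hσA, Matrix.map_mul]
      _ = A⁻¹ := by rw [nonsing_inv_mul A hA, Matrix.map_one σ σ.map_zero σ.map_one, one_mul]
  rw [RingHom.map_mulVec, hσv, mulVec_mulVec, hσAinv]

section

variable (C : Type) [Field C] (n : ℕ)

lemma iterate_XX_zero {dK : DRF C n → DRF C n}
    (hdK_X : ∀ i k, dK (XX C n i k) = XX C n i (k + 1)) (i : Fin n) (k : ℕ) :
    dK^[k] (XX C n i 0) = XX C n i k := by
  induction k with
  | zero => rfl
  | succ k ih => rw [Function.iterate_succ_apply', ih, hdK_X]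

lemma eq_top_of_CC_mem_of_XX_mem (F : Subfield (DRF C n)) (hC : ∀ c, CC C n c ∈ F)
    (hX : ∀ i k, XX C n i k ∈ F) : F = ⊤ := by
  have hpoly (p : MvPolynomial (Fin n × ℕ) C) :
      algebraMap (MvPolynomial (Fin n × ℕ) C) (DRF C n) p ∈ F := by
    induction p using MvPolynomial.induction_on with
    | C a => exact hC a
    | add p q hp hq => rw [map_add]; exact F.add_mem hp hq
    | mul_X p s hp => rw [map_mul]; exact F.mul_mem hp (hX s.1 s.2)
  refine eq_top_iff.2 fun z _ => ?_
  obtain ⟨p, q, -, rfl⟩ := IsFractionRing.div_surjective (A := MvPolynomial (Fin n × ℕ) C) z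
  exact F.div_mem (hpoly p) (hpoly q)

def IsAffineInvariant (f : DRF C n) : Prop :=
  ∀ (h : Matrix (Fin n) (Fin n) C), IsUnit h.det →
    ∀ (h₀ : Fin n → C), ∀ σ : DRF C n →+* DRF C n, IsSubstH C n h h₀ σ → σ f = f

lemma isAffineInvariant_CC (c : C) : IsAffineInvariant C n (CC C n c) :=
  fun _ _ _ _ hσ => hσ.1 c

noncomputable def wronskianMatrix : Matrix (Fin n) (Fin n) (DRF C n) :=
  of fun i a => XX C n i (a + 1)

lemma wronskianMatrix_eq_map_mvPolynomialX :
    wronskianMatrix C n = (mvPolynomialX (Fin n) (Fin n) C).map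
      ((algebraMap (MvPolynomial (Fin n × ℕ) C) (DRF C n)).comp
        (MvPolynomial.rename fun p : Fin n × Fin n => (p.1, (p.2 : ℕ) + 1)).toRingHom) := by
  ext i a
  simp [wronskianMatrix, XX]

lemma isUnit_det_wronskianMatrix : IsUnit (wronskianMatrix C n).det := by
  have hshift : Function.Injective fun p : Fin n × Fin n => (p.1, (p.2 : ℕ) + 1) :=
    fun p q h => by simpa [Prod.ext_iff, Fin.ext_iff] using h
  rw [isUnit_iff_ne_zero, wronskianMatrix_eq_map_mvPolynomialX, ← RingHom.mapMatrix_apply,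
    ← RingHom.map_det, RingHom.comp_apply, map_ne_zero_iff _ (IsFractionRing.injective _ _),
    AlgHom.toRingHom_eq_coe, RingHom.coe_coe,
    map_ne_zero_iff _ (MvPolynomial.rename_injective _ hshift)]
  exact det_mvPolynomialX_ne_zero _ _

variable {C n} in
lemma IsSubstH.map_XX_succ {h : Matrix (Fin n) (Fin n) C} {h₀ : Fin n → C}
    {σ : DRF C n →+* DRF C n} (hσ : IsSubstH C n h h₀ σ) (i : Fin n) (k : ℕ) :
    σ (XX C n i (k + 1)) = (h.map (CC C n) *ᵥ fun j => XX C n j (k + 1)) i := by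
  simp [hσ.2 i (k + 1), mulVec, dotProduct]

variable {C n} in
lemma IsSubstH.map_wronskianMatrix {h : Matrix (Fin n) (Fin n) C} {h₀ : Fin n → C}
    {σ : DRF C n →+* DRF C n} (hσ : IsSubstH C n h h₀ σ) :
    (wronskianMatrix C n).map σ = h.map (CC C n) * wronskianMatrix C n := by
  ext i a
  simp [wronskianMatrix, hσ.map_XX_succ, mulVec, dotProduct, mul_apply]

noncomputable def wronskianCoeff (k : ℕ) : Fin n → DRF C n :=
  (wronskianMatrix C n)⁻¹ *ᵥ fun j => XX C n j (k + 1)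

lemma XX_succ_eq_sum_wronskianMatrix_mul_wronskianCoeff (i : Fin n) (k : ℕ) :
    XX C n i (k + 1) = ∑ a, wronskianMatrix C n i a * wronskianCoeff C n k a := by
  have hsolve : wronskianMatrix C n *ᵥ wronskianCoeff C n k = fun j => XX C n j (k + 1) := by
    rw [wronskianCoeff, mulVec_mulVec, mul_nonsing_inv _ (isUnit_det_wronskianMatrix C n),
      one_mulVec]
  exact (congrFun hsolve i).symm

lemma isAffineInvariant_wronskianCoeff (k : ℕ) (a : Fin n) :
    IsAffineInvariant C n (wronskianCoeff C n k a) :=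
  fun _ _ _ σ hσ => σ.map_inv_mulVec_eq_of_map_eq_mul (isUnit_det_wronskianMatrix C n)
    hσ.map_wronskianMatrix (funext fun i => hσ.map_XX_succ i k) a

lemma eq_top_of_isAffineInvariant_mem_of_XX_mem (F : Subfield (DRF C n))
    (hinv : ∀ f, IsAffineInvariant C n f → f ∈ F)
    (hjet : ∀ i k, k ≤ n → XX C n i k ∈ F) : F = ⊤ := by
  refine eq_top_of_CC_mem_of_XX_mem C n F (fun c => hinv _ (isAffineInvariant_CC C n c)) ?_
  rintro i (_ | k)
  · exact hjet i 0 n.zero_le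
  · rw [XX_succ_eq_sum_wronskianMatrix_mul_wronskianCoeff]
    exact F.sum_mem fun a _ =>
      F.mul_mem (hjet i _ a.isLt) (hinv _ (isAffineInvariant_wronskianCoeff C n k a))

end

theorem stmt_14_general (C : Type) [Field C]
    (n : ℕ)
    (dK : DRF C n → DRF C n)
    (hdK_X : ∀ i k, dK (XX C n i k) = XX C n i (k + 1)) :
    Subfield.closure
      ({f : DRF C n | ∀ (h : Matrix (Fin n) (Fin n) C), IsUnit h.det →
          ∀ (h₀ : Fin n → C), ∀ σ : DRF C n →+* DRF C n,
            IsSubstH C n h h₀ σ → σ f = f}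
        ∪ Set.range (fun pr : Fin n × Fin (n + 1) => dK^[(pr.2 : ℕ)] (XX C n pr.1 0)))
      = ⊤ :=
  eq_top_of_isAffineInvariant_mem_of_XX_mem C n _
    (fun _ hf => Subfield.subset_closure (Or.inl hf))
    (fun i k hk => Subfield.subset_closure
      (Or.inr ⟨(i, ⟨k, Nat.lt_succ_of_le hk⟩), iterate_XX_zero C n hdK_X i k⟩))

/-- `C⟨x,d⟩ = C⟨x,d⟩^{GL(n,C)⋉Cⁿ}(x, dx, …, dⁿx)`: the whole field of
differential rational functions is generated, as an ordinary field, by the affine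
invariants together with `x` and its derivatives up to order `n`. -/
theorem stmt_14 (C : Type) [Field C] [CharZero C]
    (n : ℕ) (hn : 1 < n)
    (dK : DRF C n → DRF C n)
    (hdK_add : ∀ a b, dK (a + b) = dK a + dK b)
    (hdK_mul : ∀ a b, dK (a * b) = dK a * b + a * dK b)
    (hdK_X : ∀ i k, dK (XX C n i k) = XX C n i (k + 1))
    (hdK_C : ∀ c : C, dK (CC C n c) = 0) :
    Subfield.closure
      ({f : DRF C n | ∀ (h : Matrix (Fin n) (Fin n) C), IsUnit h.det →
          ∀ (h₀ : Fin n → C), ∀ σ : DRF C n →+* DRF C n,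
            IsSubstH C n h h₀ σ → σ f = f}
        ∪ Set.range (fun pr : Fin n × Fin (n + 1) => dK^[(pr.2 : ℕ)] (XX C n pr.1 0)))
      = ⊤ :=
  stmt_14_general C n dK hdK_X
end

section
/- Let C be a field of characteristic zero, H a group, and suppose for each h ∈ H a polynomial φ_h[t] = Σ_{i=0}^{k} φᵢ(h)tⁱ ∈ C[t] and a fixed monic polynomial a[t] ∈ C[t] satisfy φ_{h₁}[t]·φ_{h₂}[t] = φ_{h₁h₂}[t]·a[t] for all h₁,h₂ ∈ H, with φ_k(h₁) ≠ 0 for some h₁. Then deg φ_h = deg a for all h ∈ H, a[t] divides φ_h[t] for all h, and φ_h[t] = φ_k(h)·a[t]; moreover φ_k: H → C* is a group homomorphism. -/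
/-!
Iterating the cocycle identity gives `φ h ^ (n + 1) = φ (h ^ (n + 1)) * a ^ n`, so
`a ^ n ∣ φ h ^ (n + 1)` for every `n`, and comparing multiplicities of prime factors forces
`a ∣ φ h`. Hence `deg φ h ≥ deg a` for every `h`, and `φ h * φ h⁻¹ = φ 1 * a = a ^ 2` turns
this into an equality, so `φ h` is a constant multiple of `a`. The constants are the leading
coefficients, which are multiplicative because `a` is monic; the degree bound together with
`φ h₁`'s nonzero `k`-th coefficient identifies them with the `k`-th coefficients.
-/

open Polynomial

open UniqueFactorizationMonoid in
theorem dvd_of_forall_pow_dvd_pow_succ {M : Type*} [CommMonoidWithZero M]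
    [UniqueFactorizationMonoid M] {a b : M} (h : ∀ n : ℕ, a ^ n ∣ b ^ (n + 1)) : a ∣ b := by
  classical
  let := UniqueFactorizationMonoid.strongNormalizationMonoid (α := M)
  rcases eq_or_ne b 0 with rfl | hb
  · exact dvd_zero a
  rcases eq_or_ne a 0 with rfl | ha
  · simpa [pow_eq_zero_iff] using h 1
  rw [dvd_iff_normalizedFactors_le_normalizedFactors ha hb, Multiset.le_iff_count]
  intro p
  have hp := Multiset.le_iff_count.mp ((dvd_iff_normalizedFactors_le_normalizedFactors
    (pow_ne_zero _ ha) (pow_ne_zero _ hb)).mp (h ((normalizedFactors a).count p))) p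
  rw [normalizedFactors_pow, normalizedFactors_pow, Multiset.count_nsmul,
    Multiset.count_nsmul] at hp
  nlinarith

section Cocycle

variable {M H : Type*} [Group H] {φ : H → M} {a : M}

theorem cocycle_ne_zero [CommMonoidWithZero M] [NoZeroDivisors M]
    (hmul : ∀ g h, φ g * φ h = φ (g * h) * a) (ha : a ≠ 0) {h₀ : H}
    (hφ₀ : φ h₀ ≠ 0) (h : H) : φ h ≠ 0 := by
  intro hφ
  have := hmul h (h⁻¹ * h₀)
  rw [hφ, zero_mul, mul_inv_cancel_left, eq_comm, mul_eq_zero] at this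
  exact this.elim hφ₀ ha

theorem cocycle_one [CommMonoidWithZero M] [IsLeftCancelMulZero M]
    (hmul : ∀ g h, φ g * φ h = φ (g * h) * a) (hφ₁ : φ 1 ≠ 0) : φ 1 = a :=
  mul_left_cancel₀ hφ₁ (by simpa using hmul 1 1)

theorem cocycle_pow_succ [CommMonoid M] (hmul : ∀ g h, φ g * φ h = φ (g * h) * a)
    (h : H) (n : ℕ) : φ h ^ (n + 1) = φ (h ^ (n + 1)) * a ^ n := by
  induction n with
  | zero => simp
  | succ n ih =>
    rw [pow_succ, ih, mul_right_comm, hmul, ← pow_succ, mul_assoc, ← pow_succ']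

theorem cocycle_dvd [CommMonoidWithZero M] [UniqueFactorizationMonoid M]
    (hmul : ∀ g h, φ g * φ h = φ (g * h) * a) (h : H) : a ∣ φ h :=
  dvd_of_forall_pow_dvd_pow_succ fun n => Dvd.intro_left _ (cocycle_pow_succ hmul h n).symm

end Cocycle

namespace Polynomial

variable {R H : Type*} [CommRing R] [IsDomain R] [Group H] {φ : H → R[X]} {a : R[X]}

theorem cocycle_natDegree [UniqueFactorizationMonoid R]
    (hmul : ∀ g h, φ g * φ h = φ (g * h) * a) (hne : ∀ h, φ h ≠ 0) (h : H) :
    (φ h).natDegree = a.natDegree := by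
  have hφ₁ := cocycle_one hmul (hne 1)
  have ha : a ≠ 0 := hφ₁ ▸ hne 1
  have hsum := congrArg natDegree (hmul h h⁻¹)
  rw [mul_inv_cancel, hφ₁, natDegree_mul (hne _) (hne _), natDegree_mul ha ha] at hsum
  have hle := natDegree_le_of_dvd (cocycle_dvd hmul h) (hne h)
  have hle' := natDegree_le_of_dvd (cocycle_dvd hmul h⁻¹) (hne h⁻¹)
  omega

theorem cocycle_eq_C_leadingCoeff_mul [UniqueFactorizationMonoid R]
    (hmul : ∀ g h, φ g * φ h = φ (g * h) * a) (ha : a.Monic)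
    (hne : ∀ h, φ h ≠ 0) (h : H) : φ h = C (φ h).leadingCoeff * a := by
  obtain ⟨q, hq⟩ := cocycle_dvd hmul h
  have hq0 : q ≠ 0 := by rintro rfl; exact hne h (by simpa using hq)
  have hdeg := cocycle_natDegree hmul hne h
  rw [hq, natDegree_mul ha.ne_zero hq0, add_eq_left] at hdeg
  rw [eq_C_of_natDegree_eq_zero hdeg] at hq
  rw [hq, leadingCoeff_mul, ha.leadingCoeff, one_mul, leadingCoeff_C, mul_comm]

theorem cocycle_leadingCoeff_mul (hmul : ∀ g h, φ g * φ h = φ (g * h) * a) (ha : a.Monic)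
    (g h : H) : (φ (g * h)).leadingCoeff = (φ g).leadingCoeff * (φ h).leadingCoeff := by
  simpa [ha.leadingCoeff] using (congrArg leadingCoeff (hmul g h)).symm

end Polynomial

theorem stmt_17_general (C : Type) [Field C] (H : Type) [Group H]
    (k : ℕ) (φ : H → Polynomial C) (a : Polynomial C)
    (hdeg : ∀ h : H, (φ h).degree ≤ (k : ℕ))
    (ha : a.Monic)
    (hmul : ∀ h₁ h₂ : H, φ h₁ * φ h₂ = φ (h₁ * h₂) * a)
    (h₁ : H) (hk : (φ h₁).coeff k ≠ 0) :
    (∀ h : H, (φ h).degree = a.degree) ∧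
    (∀ h : H, a ∣ φ h) ∧
    (∀ h : H, φ h = Polynomial.C ((φ h).coeff k) * a) ∧
    (∀ h : H, (φ h).coeff k ≠ 0) ∧
    (∀ g₁ g₂ : H, (φ (g₁ * g₂)).coeff k = (φ g₁).coeff k * (φ g₂).coeff k) := by
  have hne := cocycle_ne_zero hmul ha.ne_zero (h₀ := h₁) (fun h => hk (by simp [h]))
  have hnatDegree_a : a.natDegree = k := by
    rw [← cocycle_natDegree hmul hne h₁]
    exact natDegree_eq_of_le_of_coeff_ne_zero (natDegree_le_iff_degree_le.mpr (hdeg h₁)) hk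
  have hcoeff (h : H) : (φ h).coeff k = (φ h).leadingCoeff := by
    rw [leadingCoeff, cocycle_natDegree hmul hne h, hnatDegree_a]
  refine ⟨fun h => ?_, cocycle_dvd hmul, fun h => ?_, fun h => ?_, fun g₁ g₂ => ?_⟩
  · rw [degree_eq_natDegree (hne h), degree_eq_natDegree ha.ne_zero,
      cocycle_natDegree hmul hne h]
  · rw [hcoeff]
    exact cocycle_eq_C_leadingCoeff_mul hmul ha hne h
  · rw [hcoeff, Ne, leadingCoeff_eq_zero]
    exact hne h
  · rw [hcoeff, hcoeff, hcoeff]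
    exact cocycle_leadingCoeff_mul hmul ha g₁ g₂

/-- cocycle lemma. If a family of polynomials `φ h` of degree ≤ k over a
field `C` of characteristic zero, indexed by a group `H`, satisfies
`φ h₁ * φ h₂ = φ (h₁*h₂) * a` for a fixed monic polynomial `a`, and the `k`-th
coefficient is nonzero for some `h₁`, then `deg (φ h) = deg a`, `a ∣ φ h`,
`φ h = (coeff k (φ h)) • a` for all `h`, and `h ↦ coeff k (φ h)` is a homomorphism
`H → C*` (multiplicative with all values nonzero). -/
theorem stmt_17 (C : Type) [Field C] [CharZero C] (H : Type) [Group H]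
    (k : ℕ) (φ : H → Polynomial C) (a : Polynomial C)
    (hdeg : ∀ h : H, (φ h).degree ≤ (k : ℕ))
    (ha : a.Monic)
    (hmul : ∀ h₁ h₂ : H, φ h₁ * φ h₂ = φ (h₁ * h₂) * a)
    (h₁ : H) (hk : (φ h₁).coeff k ≠ 0) :
    (∀ h : H, (φ h).degree = a.degree) ∧
    (∀ h : H, a ∣ φ h) ∧
    (∀ h : H, φ h = Polynomial.C ((φ h).coeff k) * a) ∧
    (∀ h : H, (φ h).coeff k ≠ 0) ∧
    (∀ g₁ g₂ : H, (φ (g₁ * g₂)).coeff k = (φ g₁).coeff k * (φ g₂).coeff k) :=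
  stmt_17_general C H k φ a hdeg ha hmul h₁ hk
end
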